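/- arXiv:2312.00544 — 5 statements merged into one kernel-verified Lean document; each statement's English description precedes it below -/
import Mathlib

section
/- Let p be a prime and r, s, k positive integers with p^s ≤ k < p^{s+1}. Then for all integers n, binomial(n + p^{s+r}, k) ≡ binomial(n, k) (mod p^r). -/
/-!
By Vandermonde, `C(n + p^(s+r), k) = ∑_{i+j=k} C(n, i) C(p^(s+r), j)`, and the `j = 0` term is
`C(n, k)`. For `0 < j ≤ k < p^(s+1)` we have `v_p(j) ≤ s`, so Kummer's formula
`v_p(C(p^m, j)) = m - v_p(j)` makes every other term divisible by `p^r`.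
-/

open Finset

theorem Nat.factorization_le_of_lt_pow_succ {p t j : ℕ} (hp : 1 < p) (hj : j ≠ 0)
    (hjt : j < p ^ (t + 1)) : j.factorization p ≤ t := by
  have : p ^ j.factorization p < p ^ (t + 1) :=
    (Nat.le_of_dvd (Nat.pos_of_ne_zero hj) (Nat.ordProj_dvd j p)).trans_lt hjt
  exact Nat.lt_succ_iff.mp ((Nat.pow_lt_pow_iff_right hp).mp this)

theorem Nat.Prime.pow_sub_dvd_choose_prime_pow {p m t j : ℕ} (hp : p.Prime) (hj : j ≠ 0)
    (hjt : j < p ^ (t + 1)) : p ^ (m - t) ∣ (p ^ m).choose j := by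
  rcases le_or_gt j (p ^ m) with hjm | hjm
  · rw [hp.pow_dvd_iff_le_factorization (Nat.choose_pos hjm).ne',
      Nat.factorization_choose_prime_pow hp hjm hj]
    have := Nat.factorization_le_of_lt_pow_succ hp.one_lt hj hjt
    omega
  · simp [Nat.choose_eq_zero_of_lt hjm]

theorem Ring.choose_int_add_natCast_modEq {n : ℤ} {N k : ℕ} {d : ℤ}
    (hd : ∀ j, 0 < j → j ≤ k → d ∣ N.choose j) :
    Ring.choose (n + N) k ≡ Ring.choose n k [ZMOD d] := by
  rw [Ring.add_choose_eq k (Commute.all _ _), Nat.sum_antidiagonal_eq_sum_range_succ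
    (fun i j => Ring.choose n i * Ring.choose (N : ℤ) j), sum_range_succ]
  simp only [Nat.sub_self, Ring.choose_zero_right, mul_one]
  have hsum : d ∣ ∑ i ∈ range k, Ring.choose n i * Ring.choose (N : ℤ) (k - i) :=
    dvd_sum fun i hi => by
      rw [Ring.choose_natCast]
      exact (hd (k - i) (by simp at hi; omega) (Nat.sub_le k i)).mul_left _
  simpa using (Int.modEq_zero_iff_dvd.2 hsum).add_right (Ring.choose n k)

theorem stmt_0_general (p : ℕ) (hp : p.Prime) (r s k : ℕ)
    (hks' : k < p ^ (s + 1)) (n : ℤ) :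
    Ring.choose (n + (p : ℤ) ^ (s + r)) k ≡ Ring.choose n k [ZMOD (p : ℤ) ^ r] := by
  have hN : (p : ℤ) ^ (s + r) = ((p ^ (s + r) : ℕ) : ℤ) := by push_cast; rfl
  rw [hN]
  refine Ring.choose_int_add_natCast_modEq fun j hj hjk => ?_
  have hdvd := hp.pow_sub_dvd_choose_prime_pow (m := s + r) hj.ne' (hjk.trans_lt hks')
  rw [Nat.add_sub_cancel_left] at hdvd
  exact_mod_cast hdvd

/-- Congruence of generalized binomial coefficients: for a prime `p` and positive
integers `r, s, k` with `p^s ≤ k < p^(s+1)`, we have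
`C(n + p^(s+r), k) ≡ C(n, k) (mod p^r)` for all integers `n`, where `C(n,k)` is the
binomial coefficient extended polynomially to all integers. -/
theorem stmt_0 (p : ℕ) (hp : p.Prime) (r s k : ℕ) (hr : 0 < r) (hs : 0 < s)
    (hk : 0 < k) (hks : p ^ s ≤ k) (hks' : k < p ^ (s + 1)) (n : ℤ) :
    Ring.choose (n + (p : ℤ) ^ (s + r)) k ≡ Ring.choose n k [ZMOD (p : ℤ) ^ r] :=
  stmt_0_general p hp r s k hks' n
end

section
/- Let f ∈ ℚ[x₁,…,xₙ] be integer-valued on ℤⁿ, let q = p^s be a prime power, let d = max_i deg_{x_i}(f), and set r = p^{⌊log_p d⌋ + s}. Then for all v, w ∈ ℤⁿ, f(v + r·w) ≡ f(v) (mod q). -/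
/-!
Restricted to a coordinate line, `f` becomes an integer-valued polynomial `G : ℤ → ℤ` of degree
at most `d`, so `Δ^[d+1] G = 0` and Newton's formula reads
`G (t + r) - G t = ∑_{1 ≤ k ≤ d} (r choose k) • Δ^[k] G t` with integer `Δ^[k] G t`.
By Kummer, `v_p ((p^m) choose k) = m - v_p k ≥ s` for `1 ≤ k ≤ d` when `m = ⌊log_p d⌋ + s`,
so `r` times each unit vector is a period of `f` modulo `p^s`; periods form a group.
-/

open MvPolynomial Finset fwdDiff

section fwdDiff

variable {M M' G G' : Type*} [AddCommMonoid M] [AddCommMonoid M'] [AddCommGroup G]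
  [AddCommGroup G']

lemma fwdDiff_iter_addMonoidHom_comp (φ : G →+ G') (h : M) (f : M → G) (k : ℕ) :
    Δ_[h] ^[k] (φ ∘ f) = φ ∘ Δ_[h] ^[k] f := by
  induction k with
  | zero => rfl
  | succ k ih =>
    ext t
    simp [Function.iterate_succ_apply', ih, fwdDiff]

lemma fwdDiff_iter_comp_addMonoidHom (ψ : M →+ M') (h : M) (f : M' → G) (k : ℕ) :
    Δ_[h] ^[k] (f ∘ ψ) = Δ_[ψ h] ^[k] f ∘ ψ := by
  induction k with
  | zero => rfl
  | succ k ih =>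
    ext t
    simp [Function.iterate_succ_apply', ih, fwdDiff]

lemma fwdDiff_iter_eq_zero_of_le (h : M) {f : M → G} {d k : ℕ} (hf : Δ_[h] ^[d] f = 0)
    (hdk : d ≤ k) : Δ_[h] ^[k] f = 0 := by
  obtain ⟨j, rfl⟩ := Nat.exists_eq_add_of_le' hdk
  rw [Function.iterate_add_apply, hf]
  exact Function.iterate_fixed (fwdDiff_const h 0) j

end fwdDiff

theorem Nat.Prime.pow_dvd_choose_pow_log_add {p : ℕ} (hp : p.Prime) (s : ℕ) {d k : ℕ}
    (hk : k ≠ 0) (hkd : k ≤ d) : p ^ s ∣ (p ^ (Nat.log p d + s)).choose k := by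
  rcases lt_or_ge (p ^ (Nat.log p d + s)) k with hlt | hle
  · simp [Nat.choose_eq_zero_of_lt hlt]
  have hmult : multiplicity p k ≤ Nat.log p d :=
    (Nat.le_log_of_pow_le hp.one_lt
      (Nat.le_of_dvd (Nat.pos_of_ne_zero hk) (pow_multiplicity_dvd p k))).trans
      (Nat.log_mono_right hkd)
  apply pow_dvd_of_le_emultiplicity
  rw [hp.emultiplicity_choose_prime_pow hle hk]
  exact_mod_cast by omega

def modPeriods {M : Type*} [AddGroup M] (F : M → ℤ) (q : ℤ) : AddSubgroup M where
  carrier := {u | ∀ v, F (v + u) ≡ F v [ZMOD q]}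
  zero_mem' v := by rw [add_zero]
  add_mem' {u u'} hu hu' v := by rw [← add_assoc]; exact (hu' _).trans (hu v)
  neg_mem' {u} hu v := by simpa using (hu (v + -u)).symm

lemma pow_log_add_mem_modPeriods {G : ℤ → ℤ} {p d : ℕ} (hp : p.Prime) (s : ℕ)
    (hG : Δ_[1] ^[d + 1] G = 0) :
    ((p ^ (Nat.log p d + s) : ℕ) : ℤ) ∈ modPeriods G (p ^ s) := by
  set r := p ^ (Nat.log p d + s)
  intro t
  refine (Int.modEq_iff_dvd.mpr ?_).symm
  have newton := shift_eq_sum_fwdDiff_iter 1 G r t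
  rw [nsmul_one, sum_range_succ'] at newton
  rw [newton, Nat.choose_zero_right, Function.iterate_zero, one_smul, id, add_sub_cancel_right]
  refine dvd_sum fun k _ => ?_
  rcases le_or_gt (k + 1) d with hkd | hdk
  · rw [nsmul_eq_mul]
    exact dvd_mul_of_dvd_left
      (by exact_mod_cast hp.pow_dvd_choose_pow_log_add s k.succ_ne_zero hkd) _
  · rw [fwdDiff_iter_eq_zero_of_le 1 hG hdk, Pi.zero_apply, smul_zero]
    exact dvd_zero _

open Polynomial in
lemma fwdDiff_iter_eq_zero_of_intCast_eq_eval {R : Type*} [CommRing R] [CharZero R]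
    {G : ℤ → ℤ} {g : R[X]} (hG : ∀ t, (G t : R) = g.eval (t : R)) :
    Δ_[1] ^[g.natDegree + 1] G = 0 := by
  have hcast : (Int.castAddHom R) ∘ G = g.eval ∘ (Int.castAddHom R) := funext hG
  have := fwdDiff_iter_addMonoidHom_comp (Int.castAddHom R) 1 G (g.natDegree + 1)
  rw [hcast, fwdDiff_iter_comp_addMonoidHom, show Int.castAddHom R 1 = 1 from Int.cast_one,
    Polynomial.fwdDiff_iter_eq_zero_of_degree_lt g.natDegree.lt_succ_self] at this
  ext t
  simpa using (congr_fun this t).symm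

open Polynomial in
lemma MvPolynomial.exists_natDegree_le_degreeOf_eval_update {R σ : Type*} [CommRing R]
    [DecidableEq σ] (f : MvPolynomial σ R) (j : σ) (v : σ → R) :
    ∃ g : R[X], g.natDegree ≤ f.degreeOf j ∧ ∀ t, g.eval t = eval (Function.update v j t) f := by
  set e := Equiv.optionSubtypeNe j
  refine ⟨(optionEquivLeft R _ (rename e.symm f)).map (eval fun b : {b // b ≠ j} => v b),
    ?_, fun t => ?_⟩
  · rw [degreeOf_eq_natDegree]
    exact natDegree_map_le
  · rw [← optionEquivLeft_elim_eval, eval_rename]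
    congr 2
    funext i
    by_cases hij : i = j
    · subst hij; simp [e]
    · simp [e, hij]

section IntValued

variable {R σ : Type*} [CommRing R] [CharZero R] [DecidableEq σ] {f : MvPolynomial σ R}
  {F : (σ → ℤ) → ℤ} {p d : ℕ}

lemma single_pow_log_add_mem_modPeriods (hF : ∀ a, (F a : R) = eval (fun i => (a i : R)) f)
    (hp : p.Prime) (s : ℕ) {j : σ} (hj : f.degreeOf j ≤ d) :
    Pi.single j ((p ^ (Nat.log p d + s) : ℕ) : ℤ) ∈ modPeriods F (p ^ s) := by
  intro v
  obtain ⟨g, hgd, hg⟩ := f.exists_natDegree_le_degreeOf_eval_update j (fun i => (v i : R))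
  have hG : ∀ t : ℤ, (F (Function.update v j t) : R) = g.eval (t : R) := fun t => by
    rw [hF, hg]
    exact congrArg (fun x => eval x f) (Function.comp_update Int.cast v j t)
  have hvanish : Δ_[1] ^[d + 1] (fun t => F (Function.update v j t)) = 0 :=
    fwdDiff_iter_eq_zero_of_le 1 (fwdDiff_iter_eq_zero_of_intCast_eq_eval hG) (by omega)
  have := pow_log_add_mem_modPeriods hp s hvanish (v j)
  have hshift (u : ℤ) : Function.update v j (v j + u) = v + Pi.single j u := by
    rw [Pi.update_eq_sub_add_single, Pi.single_add]
    abel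
  rwa [Function.update_eq_self, hshift] at this

lemma pow_log_add_smul_mem_modPeriods [Fintype σ]
    (hF : ∀ a, (F a : R) = eval (fun i => (a i : R)) f)
    (hp : p.Prime) (s : ℕ) (hd : ∀ j, f.degreeOf j ≤ d) (w : σ → ℤ) :
    ((p ^ (Nat.log p d + s) : ℕ) : ℤ) • w ∈ modPeriods F (p ^ s) := by
  rw [← Finset.univ_sum_single w, Finset.smul_sum]
  refine sum_mem fun j _ => ?_
  rw [← Pi.single_smul, smul_eq_mul, mul_comm, ← smul_eq_mul, Pi.single_smul]
  exact zsmul_mem (single_pow_log_add_mem_modPeriods hF hp s (hd j)) _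

end IntValued

theorem stmt_2_general (n : ℕ) (f : MvPolynomial (Fin n) ℚ)
    (hint : ∀ a : Fin n → ℤ, ∃ z : ℤ, eval (fun i => (a i : ℚ)) f = (z : ℚ))
    (p s : ℕ) (hp : p.Prime)
    (d : ℕ) (hd : d = Finset.univ.sup (fun i => f.degreeOf i))
    (r : ℕ) (hr : r = p ^ (Nat.log p d + s))
    (v w : Fin n → ℤ) :
    ∃ z : ℤ, eval (fun i => ((v i + (r : ℤ) * w i : ℤ) : ℚ)) f
        - eval (fun i => (v i : ℚ)) f = ((p : ℚ) ^ s) * z := by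
  subst hr
  choose F hF using hint
  have hdeg (j : Fin n) : f.degreeOf j ≤ d := hd ▸ le_sup (f := (f.degreeOf ·)) (mem_univ j)
  have hper := pow_log_add_smul_mem_modPeriods (fun a => (hF a).symm) hp s hdeg w
  obtain ⟨z, hz⟩ := (hper v).symm.dvd
  refine ⟨z, ?_⟩
  rw [hF, hF]
  exact_mod_cast hz

/-- Periodicity of an integer-valued polynomial modulo a prime power: if
`f ∈ ℚ[x₁,…,xₙ]` is integer-valued, `q = p^s` is a prime power,
`d = maxᵢ deg_{xᵢ} f ≥ 1`, and `r = p^(⌊log_p d⌋ + s)`, then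
`f(v + r·w) ≡ f(v) (mod q)` for all `v, w ∈ ℤⁿ`. -/
theorem stmt_2 (n : ℕ) (f : MvPolynomial (Fin n) ℚ)
    (hint : ∀ a : Fin n → ℤ, ∃ z : ℤ, eval (fun i => (a i : ℚ)) f = (z : ℚ))
    (p s : ℕ) (hp : p.Prime) (hs : 0 < s)
    (d : ℕ) (hd : d = Finset.univ.sup (fun i => f.degreeOf i)) (hd1 : 1 ≤ d)
    (r : ℕ) (hr : r = p ^ (Nat.log p d + s))
    (v w : Fin n → ℤ) :
    ∃ z : ℤ, eval (fun i => ((v i + (r : ℤ) * w i : ℤ) : ℚ)) f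
        - eval (fun i => (v i : ℚ)) f = ((p : ℚ) ^ s) * z :=
  stmt_2_general n f hint p s hp d hd r hr v w
end

section
/- Let m = q₁···q_r with qᵢ = pᵢ^{αᵢ} its prime-power factorization, let f : ℤⁿ → ℤ be skew-symmetric (vanishing whenever coordinates coincide), and suppose ϖᵢ is a qᵢ-period of f for each i, with ϖmax = maxᵢ ϖᵢ. Then for n ≥ 2, the density of {x ∈ ℤⁿ : m ∤ f(x)} is at most ω(m)·exp(−n²/(4ϖmax)), where ω(m) = r is the number of distinct prime factors of m. -/
/-!
If `m ∤ f x`, then some prime power `qᵢ ∤ f x`. Two coordinates of `x` congruent modulo `ϖᵢ`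
would let us move one onto the other by a multiple of `ϖᵢ` without changing `f x mod qᵢ`,
reaching a point where `f` vanishes; so `x mod ϖᵢ` is injective. In the box, the proportion of
such `x` is `ϖᵢ(ϖᵢ - 1)⋯(ϖᵢ - n + 1) / ϖᵢⁿ ≤ ∏ₖ exp(-k/ϖᵢ) = exp(-n(n-1)/(2ϖᵢ))`, and this is
at most `exp(-n²/(4ϖmax))` for `n ≥ 2`. A union bound over the `r` prime powers finishes.
-/

open Finset Function Real

lemma natCast_sub_le_mul_exp {ϖ : ℕ} (hϖ : 0 < ϖ) (k : ℕ) :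
    ((ϖ - k : ℕ) : ℝ) ≤ ϖ * exp (-k / ϖ) := by
  rcases le_or_gt k ϖ with hk | hk
  · have hϖR : (0 : ℝ) < ϖ := by exact_mod_cast hϖ
    calc ((ϖ - k : ℕ) : ℝ) = ϖ * (-k / ϖ + 1) := by
          rw [Nat.cast_sub hk]; field_simp; ring
      _ ≤ ϖ * exp (-k / ϖ) := by gcongr; exact add_one_le_exp _
  · rw [Nat.sub_eq_zero_of_le hk.le, Nat.cast_zero]; positivity

lemma descFactorial_le_pow_mul_exp {ϖ : ℕ} (hϖ : 0 < ϖ) (n : ℕ) :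
    (ϖ.descFactorial n : ℝ) ≤ ϖ ^ n * exp (-(n.choose 2 : ℝ) / ϖ) := by
  have hsum : ∑ k ∈ range n, (k : ℝ) = n.choose 2 := by
    rw [← Nat.cast_sum, sum_range_id, Nat.choose_two_right]
  calc (ϖ.descFactorial n : ℝ) = ∏ k ∈ range n, ((ϖ - k : ℕ) : ℝ) := by
        rw [Nat.descFactorial_eq_prod_range, Nat.cast_prod]
    _ ≤ ∏ k ∈ range n, (ϖ * exp (-k / ϖ)) :=
        prod_le_prod (fun _ _ => by positivity) fun k _ => natCast_sub_le_mul_exp hϖ k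
    _ = ϖ ^ n * exp (-(n.choose 2 : ℝ) / ϖ) := by
        rw [prod_mul_distrib, prod_const, card_range, ← exp_sum, ← hsum, ← sum_div,
          sum_neg_distrib]

lemma descFactorial_div_pow_le_exp {n ϖ : ℕ} (hn : 2 ≤ n) (hϖ : 0 < ϖ) :
    (ϖ.descFactorial n : ℝ) / ϖ ^ n ≤ exp (-(n : ℝ) ^ 2 / (4 * ϖ)) := by
  have hϖR : (0 : ℝ) < ϖ := by exact_mod_cast hϖ
  rw [div_le_iff₀ (by positivity), mul_comm]
  refine (descFactorial_le_pow_mul_exp hϖ n).trans ?_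
  gcongr ϖ ^ n * exp ?_
  have hn' : (2 : ℝ) ≤ n := by exact_mod_cast hn
  rw [Nat.cast_choose_two, neg_div, neg_div, neg_le_neg_iff, div_le_div_iff₀ (by positivity) hϖR]
  nlinarith [mul_le_mul_of_nonneg_right hn' (by positivity : (0 : ℝ) ≤ n * ϖ)]

section FundamentalBox

variable (ι : Type*) [Fintype ι] [DecidableEq ι]

noncomputable def fundamentalBox (W : ℕ) : Finset (ι → ℤ) :=
  Fintype.piFinset fun _ => Ico 0 (W : ℤ)

variable {ι}

lemma mem_fundamentalBox {W : ℕ} {x : ι → ℤ} :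
    x ∈ fundamentalBox ι W ↔ ∀ i, 0 ≤ x i ∧ x i < W := by
  simp only [fundamentalBox, Fintype.mem_piFinset, mem_Ico]

lemma card_fundamentalBox (W : ℕ) : #(fundamentalBox ι W) = W ^ Fintype.card ι := by
  simp [fundamentalBox]

lemma card_fundamentalBox_filter_cast_eq_le {ϖ W : ℕ} (hϖ : 0 < ϖ) (hdvd : ϖ ∣ W)
    (b : ι → ZMod ϖ) :
    #{x ∈ fundamentalBox ι W | Int.cast ∘ x = b} ≤ (W / ϖ) ^ Fintype.card ι := by
  have hϖZ : (0 : ℤ) < ϖ := by exact_mod_cast hϖ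
  rw [← card_fundamentalBox]
  refine card_le_card_of_injOn (fun x j => x j / ϖ) (fun x hx => ?_) fun x hx y hy hxy => ?_
  · rw [mem_coe, mem_filter, mem_fundamentalBox] at hx
    rw [mem_coe, mem_fundamentalBox]
    intro j
    refine ⟨Int.ediv_nonneg (hx.1 j).1 hϖZ.le, ?_⟩
    rw [Int.ediv_lt_iff_lt_mul hϖZ, ← Nat.cast_mul, Nat.div_mul_cancel hdvd]
    exact (hx.1 j).2
  · rw [mem_coe, mem_filter] at hx hy
    funext j
    have hmod : x j % ϖ = y j % ϖ :=
      (ZMod.intCast_eq_intCast_iff' _ _ _).mp (congrFun (hx.2.trans hy.2.symm) j)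
    have hdiv : x j / ϖ = y j / ϖ := congrFun hxy j
    rw [← Int.mul_ediv_add_emod (x j) ϖ, ← Int.mul_ediv_add_emod (y j) ϖ, hdiv, hmod]

lemma card_fundamentalBox_filter_injective_cast_le {ϖ W : ℕ} (hϖ : 0 < ϖ) (hdvd : ϖ ∣ W) :
    #{x ∈ fundamentalBox ι W | Injective (Int.cast ∘ x : ι → ZMod ϖ)}
      ≤ (W / ϖ) ^ Fintype.card ι * ϖ.descFactorial (Fintype.card ι) := by
  have : NeZero ϖ := ⟨hϖ.ne'⟩
  refine (card_le_mul_card_image (f := (Int.cast ∘ · : (ι → ℤ) → ι → ZMod ϖ)) _ _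
    fun b _ => ?_).trans (Nat.mul_le_mul_left _ ?_)
  · exact (card_le_card (filter_subset_filter _ (filter_subset _ _))).trans
      (card_fundamentalBox_filter_cast_eq_le hϖ hdvd b)
  · calc #(image (Int.cast ∘ ·) _) ≤ #({g | Injective g} : Finset (ι → ZMod ϖ)) :=
          card_le_card fun g hg => by
            obtain ⟨x, hx, rfl⟩ := mem_image.mp hg
            exact mem_filter.mpr ⟨mem_univ _, (mem_filter.mp hx).2⟩
      _ = ϖ.descFactorial (Fintype.card ι) := by
          rw [← Fintype.card_subtype,
            Fintype.card_congr (Equiv.subtypeInjectiveEquivEmbedding _ _),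
            Fintype.card_embedding_eq, ZMod.card]

lemma card_fundamentalBox_filter_injective_cast_div_le {ϖ W : ℕ} (hι : 2 ≤ Fintype.card ι)
    (hW : 0 < W) (hdvd : ϖ ∣ W) :
    (#{x ∈ fundamentalBox ι W | Injective (Int.cast ∘ x : ι → ZMod ϖ)} : ℝ)
        / (W : ℝ) ^ Fintype.card ι
      ≤ exp (-(Fintype.card ι : ℝ) ^ 2 / (4 * ϖ)) := by
  set n := Fintype.card ι
  have hϖ : 0 < ϖ := Nat.pos_of_dvd_of_pos hdvd hW
  have hϖR : (0 : ℝ) < ϖ := by exact_mod_cast hϖ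
  have hWR : (W : ℝ) ≠ 0 := by exact_mod_cast hW.ne'
  calc _ ≤ (((W / ϖ) ^ n * ϖ.descFactorial n : ℕ) : ℝ) / (W : ℝ) ^ n := by
        gcongr
        exact card_fundamentalBox_filter_injective_cast_le hϖ hdvd
    _ = (ϖ.descFactorial n : ℝ) / ϖ ^ n := by
        push_cast
        rw [Nat.cast_div hdvd hϖR.ne', div_pow]
        field_simp
    _ ≤ exp (-(n : ℝ) ^ 2 / (4 * ϖ)) := descFactorial_div_pow_le_exp hι hϖ

end FundamentalBox

lemma exists_not_dvd_of_not_prod_primePow_dvd {ι : Type*} [Fintype ι] {p : ι → ℕ}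
    (hp : ∀ i, (p i).Prime) (hinj : Injective p) (α : ι → ℕ) {a : ℤ}
    (ha : ¬ ((∏ i, p i ^ α i : ℕ) : ℤ) ∣ a) : ∃ i, ¬ ((p i ^ α i : ℕ) : ℤ) ∣ a := by
  contrapose! ha
  rw [Nat.cast_prod]
  refine prod_dvd_of_coprime (fun i _ j _ hij => ?_) fun i _ => ha i
  exact Nat.isCoprime_iff_coprime.mpr <| Nat.Coprime.pow _ _ <|
    (Nat.coprime_primes (hp i) (hp j)).mpr (hinj.ne hij)

lemma dvd_of_not_injective_cast {ι : Type*} [DecidableEq ι] {f : (ι → ℤ) → ℤ}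
    (hskew : ∀ x, ¬ Injective x → f x = 0) {ϖ : ℕ} {q : ℤ}
    (hper : ∀ v w, f (v + (ϖ : ℤ) • w) ≡ f v [ZMOD q]) {x : ι → ℤ}
    (hx : ¬ Injective (Int.cast ∘ x : ι → ZMod ϖ)) : q ∣ f x := by
  obtain ⟨j, k, hjk, hne⟩ := not_injective_iff.mp hx
  obtain ⟨d, hd⟩ := (ZMod.intCast_eq_intCast_iff_dvd_sub _ _ _).mp hjk
  set v := update x k (x j)
  have hxv : v + (ϖ : ℤ) • Pi.single k d = x := by
    funext l
    rcases eq_or_ne l k with rfl | hl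
    · simp only [v, Pi.add_apply, Pi.smul_apply, update_self, Pi.single_eq_same, smul_eq_mul]
      linarith
    · simp [v, hl]
  have hv : f v = 0 := hskew v fun hv => hne <| hv <| by simp [v, hne]
  have := hper v (Pi.single k d)
  rwa [hxv, hv, Int.modEq_zero_iff_dvd] at this

open Finset in
theorem stmt_16_general (n r : ℕ) (hn : 2 ≤ n)
    (p α : Fin r → ℕ) (hp : ∀ i, (p i).Prime)
    (hinj : Function.Injective p)
    (m : ℕ) (hm : m = ∏ i, p i ^ α i)
    (f : (Fin n → ℤ) → ℤ)
    (hskew : ∀ x : Fin n → ℤ, ¬ Function.Injective x → f x = 0)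
    (ϖ : Fin r → ℕ) (hϖ : ∀ i, 1 ≤ ϖ i)
    (hper : ∀ i, ∀ v w : Fin n → ℤ,
      f (v + (ϖ i : ℤ) • w) ≡ f v [ZMOD ((p i ^ α i : ℕ) : ℤ)]) :
    (Nat.card {x : Fin n → ℤ |
        (∀ i, 0 ≤ x i ∧ x i < (∏ j, ϖ j : ℕ)) ∧ ¬ (m : ℤ) ∣ f x} : ℝ)
      / ((∏ j, ϖ j : ℕ) : ℝ) ^ n
    ≤ (r : ℝ) * Real.exp (-(n : ℝ) ^ 2 / (4 * (univ.sup ϖ : ℕ))) := by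
  set W := ∏ j, ϖ j
  set box := fundamentalBox (Fin n) W
  set bad : Fin r → Finset (Fin n → ℤ) :=
    fun i => {x ∈ box | Injective (Int.cast ∘ x : Fin n → ZMod (ϖ i))}
  have hW : 0 < W := prod_pos fun j _ => hϖ j
  have hset : {x : Fin n → ℤ | (∀ i, 0 ≤ x i ∧ x i < W) ∧ ¬ (m : ℤ) ∣ f x}
      = ↑{x ∈ box | ¬ (m : ℤ) ∣ f x} := by
    ext x; simp [box, mem_fundamentalBox]
  have hcover : {x ∈ box | ¬ (m : ℤ) ∣ f x} ⊆ univ.biUnion bad := by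
    intro x hx
    rw [mem_filter, hm] at hx
    obtain ⟨i, hi⟩ := exists_not_dvd_of_not_prod_primePow_dvd hp hinj α hx.2
    exact mem_biUnion.mpr ⟨i, mem_univ _,
      mem_filter.mpr ⟨hx.1, Not.imp_symm (dvd_of_not_injective_cast hskew (hper i)) hi⟩⟩
  have hbad : ∀ i,
      (#(bad i) : ℝ) / (W : ℝ) ^ n ≤ exp (-(n : ℝ) ^ 2 / (4 * (univ.sup ϖ : ℕ))) := by
    intro i
    have hle : (ϖ i : ℝ) ≤ (univ.sup ϖ : ℕ) := by exact_mod_cast le_sup (mem_univ i)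
    have hϖi : (0 : ℝ) < ϖ i := by exact_mod_cast hϖ i
    have hdensity := card_fundamentalBox_filter_injective_cast_div_le (ι := Fin n)
      (by rwa [Fintype.card_fin]) hW (dvd_prod_of_mem ϖ (mem_univ i))
    rw [Fintype.card_fin] at hdensity
    refine hdensity.trans ?_
    rw [exp_le_exp, neg_div, neg_div, neg_le_neg_iff]
    gcongr
  rw [hset, Nat.card_coe_set_eq, Set.ncard_coe_finset]
  calc (#{x ∈ box | ¬ (m : ℤ) ∣ f x} : ℝ) / (W : ℝ) ^ n
      ≤ (∑ i, #(bad i) : ℕ) / (W : ℝ) ^ n := by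
        gcongr
        exact (card_le_card hcover).trans card_biUnion_le
    _ = ∑ i, (#(bad i) : ℝ) / (W : ℝ) ^ n := by rw [Nat.cast_sum, sum_div]
    _ ≤ ∑ _i : Fin r, exp (-(n : ℝ) ^ 2 / (4 * (univ.sup ϖ : ℕ))) :=
        sum_le_sum fun i _ => hbad i
    _ = r * exp (-(n : ℝ) ^ 2 / (4 * (univ.sup ϖ : ℕ))) := by simp

open Finset in
/-- Let `m = q₁⋯q_r` with `qᵢ = pᵢ^{αᵢ}` its prime-power factorization and let
`f : ℤⁿ → ℤ` be skew-symmetric. If `ϖᵢ` is a `qᵢ`-period of `f` and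
`ϖmax = maxᵢ ϖᵢ`, then for `n ≥ 2` the density of `{x : m ∤ f(x)}`, computed on the
fundamental box of side `ϖ₁⋯ϖ_r`, is at most `ω(m)·exp(−n²/(4ϖmax))` with `ω(m) = r`. -/
theorem stmt_16 (n r : ℕ) (hn : 2 ≤ n)
    (p α : Fin r → ℕ) (hp : ∀ i, (p i).Prime) (hα : ∀ i, 1 ≤ α i)
    (hinj : Function.Injective p)
    (m : ℕ) (hm : m = ∏ i, p i ^ α i)
    (f : (Fin n → ℤ) → ℤ)
    (hskew : ∀ x : Fin n → ℤ, ¬ Function.Injective x → f x = 0)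
    (ϖ : Fin r → ℕ) (hϖ : ∀ i, 1 ≤ ϖ i)
    (hper : ∀ i, ∀ v w : Fin n → ℤ,
      f (v + (ϖ i : ℤ) • w) ≡ f v [ZMOD ((p i ^ α i : ℕ) : ℤ)]) :
    (Nat.card {x : Fin n → ℤ |
        (∀ i, 0 ≤ x i ∧ x i < (∏ j, ϖ j : ℕ)) ∧ ¬ (m : ℤ) ∣ f x} : ℝ)
      / ((∏ j, ϖ j : ℕ) : ℝ) ^ n
    ≤ (r : ℝ) * Real.exp (-(n : ℝ) ^ 2 / (4 * (univ.sup ϖ : ℕ))) :=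
  stmt_16_general n r hn p α hp hinj m hm f hskew ϖ hϖ hper
end

section
/- Let L be a lattice of rank n, L' a full-rank sublattice, A a periodic subset of L, and A' = A ∩ L'. Then the density of A' in L' is at most [L : L'] times the density of A in L. -/
/-! Compare both densities at the common period `m = ϖ ϖ'`. Refining the period of a periodic set
by a factor `t` multiplies its box count by `t ^ n`, so both densities can be read off at
period `m`. There, a point `y` of the `B'`-box of `L'` is determined by its coordinatewise
remainder `r` modulo `m` in the basis `B`, which lies in `A` and in the `B`-box, together with the
class of `(y - r) / m` in `L ⧸ L'`: two such points with the same data differ by an element of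
`m • L'`, and the `B'`-box meets each coset of `m • L'` once. -/

open Module

section

variable {ι L : Type*} [AddCommGroup L]

def IsPeriodic (A : Set L) (p : ℕ) : Prop :=
  ∀ a v : L, a ∈ A ↔ a + (p : ℤ) • v ∈ A

lemma IsPeriodic.of_dvd {A : Set L} {p q : ℕ} (hA : IsPeriodic A p) (hpq : p ∣ q) :
    IsPeriodic A q := by
  obtain ⟨r, rfl⟩ := hpq
  intro a v
  rw [Nat.cast_mul, mul_smul]
  exact hA a _

namespace Module.Basis

variable [Module ℤ L] (b : Basis ι ℤ L)

def box (p : ℕ) : Set L := {y | ∀ i, 0 ≤ b.repr y i ∧ b.repr y i < p}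

lemma add_smul_mem_box {p t : ℕ} {r u : L} (hr : r ∈ b.box p) (hu : u ∈ b.box t) :
    r + (p : ℤ) • u ∈ b.box (p * t) := fun i => by
  obtain ⟨hr0, hrp⟩ := hr i
  obtain ⟨hu0, hut⟩ := hu i
  simp only [map_add, map_zsmul, Finsupp.coe_add, Finsupp.coe_smul, Pi.add_apply,
    Pi.smul_apply, smul_eq_mul, Nat.cast_mul]
  constructor <;> nlinarith

variable [Fintype ι]

noncomputable def coordDiv (p : ℕ) (y : L) : L := b.equivFun.symm fun i => b.repr y i / p

noncomputable def coordMod (p : ℕ) (y : L) : L := b.equivFun.symm fun i => b.repr y i % p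

lemma repr_equivFun_symm (f : ι → ℤ) (i : ι) : b.repr (b.equivFun.symm f) i = f i := by
  rw [← b.equivFun_apply, b.equivFun.apply_symm_apply]

variable {b} {p : ℕ}

lemma coordMod_add_smul_coordDiv (y : L) : b.coordMod p y + (p : ℤ) • b.coordDiv p y = y :=
  b.ext_elem fun i => by
    simp only [coordMod, coordDiv, map_add, map_zsmul, Finsupp.coe_add, Finsupp.coe_smul,
      Pi.add_apply, Pi.smul_apply, repr_equivFun_symm, smul_eq_mul, Int.emod_add_mul_ediv]

lemma coordMod_mem_box (hp : 0 < p) (y : L) : b.coordMod p y ∈ b.box p := fun i => by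
  rw [coordMod, repr_equivFun_symm]
  exact ⟨Int.emod_nonneg _ (by omega), Int.emod_lt_of_pos _ (by omega)⟩

lemma coordDiv_mem_box {t : ℕ} {y : L} (hy : y ∈ b.box (p * t)) : b.coordDiv p y ∈ b.box t :=
  fun i => by
  rw [coordDiv, repr_equivFun_symm]
  obtain ⟨h0, hlt⟩ := hy i
  push_cast at hlt
  have hp : (0 : ℤ) < p := by
    by_contra! hp
    nlinarith [Int.natCast_nonneg p, Int.natCast_nonneg t]
  exact ⟨Int.ediv_nonneg h0 hp.le, Int.ediv_lt_of_lt_mul hp (by linarith)⟩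

lemma coordMod_add_smul {r : L} (hr : r ∈ b.box p) (u : L) :
    b.coordMod p (r + (p : ℤ) • u) = r :=
  b.ext_elem fun i => by
    simp only [coordMod, repr_equivFun_symm, map_add, map_zsmul, Finsupp.coe_add, Finsupp.coe_smul,
      Pi.add_apply, Pi.smul_apply, smul_eq_mul, Int.add_mul_emod_self_left,
      Int.emod_eq_of_lt (hr i).1 (hr i).2]

lemma coordDiv_add_smul {r : L} (hr : r ∈ b.box p) (u : L) :
    b.coordDiv p (r + (p : ℤ) • u) = u :=
  b.ext_elem fun i => by
    have hp : (p : ℤ) ≠ 0 := ((hr i).1.trans_lt (hr i).2).ne'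
    simp only [coordDiv, repr_equivFun_symm, map_add, map_zsmul, Finsupp.coe_add, Finsupp.coe_smul,
      Pi.add_apply, Pi.smul_apply, smul_eq_mul, Int.add_mul_ediv_left _ _ hp,
      Int.ediv_eq_zero_of_lt (hr i).1 (hr i).2, zero_add]

lemma eq_of_mem_box_of_eq_add_smul {y z w : L} (hy : y ∈ b.box p) (hz : z ∈ b.box p)
    (h : y = z + (p : ℤ) • w) : y = z := by
  rw [← coordMod_add_smul hz w, ← h]
  simpa using (coordMod_add_smul hy 0).symm

lemma eq_add_smul_of_coordMod_eq {y z : L} (h : b.coordMod p y = b.coordMod p z) :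
    z = y + (p : ℤ) • (-b.coordDiv p y + b.coordDiv p z) := by
  conv_lhs => rw [← b.coordMod_add_smul_coordDiv (p := p) z]
  conv_rhs => arg 1; rw [← b.coordMod_add_smul_coordDiv (p := p) y]
  rw [h, zsmul_add, zsmul_neg]
  abel

variable (b p) in
lemma card_box : Nat.card (b.box p) = p ^ Fintype.card ι := by
  have hbox : b.box p = b.equivFun ⁻¹' Set.univ.pi fun _ => Set.Ico 0 (p : ℤ) := by
    ext y
    simp [box]
  rw [hbox, Nat.card_preimage_of_injective b.equivFun.injective (by simp),
    Nat.card_congr (Equiv.Set.univPi _), Nat.card_pi]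
  simp

lemma _root_.IsPeriodic.coordMod_mem_iff {A : Set L} (hA : IsPeriodic A p) (y : L) :
    b.coordMod p y ∈ A ↔ y ∈ A := by
  conv_rhs => rw [← b.coordMod_add_smul_coordDiv (p := p) y]
  exact hA _ _

lemma card_box_mul_inter {A : Set L} (hp : 0 < p) (hA : IsPeriodic A p) (t : ℕ) :
    Nat.card (b.box (p * t) ∩ A : Set L) =
      Nat.card (b.box p ∩ A : Set L) * t ^ Fintype.card ι := by
  rw [← b.card_box t, ← Nat.card_prod]
  exact Nat.card_congr
    { toFun := fun y => (⟨b.coordMod p y, coordMod_mem_box hp (y : L),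
          (hA.coordMod_mem_iff (y : L)).2 y.2.2⟩, ⟨b.coordDiv p y, coordDiv_mem_box y.2.1⟩)
      invFun := fun ru => ⟨ru.1 + (p : ℤ) • ru.2, b.add_smul_mem_box ru.1.2.1 ru.2.2,
        (hA _ _).1 ru.1.2.2⟩
      left_inv := fun y => Subtype.ext (coordMod_add_smul_coordDiv (y : L))
      right_inv := fun ru => Prod.ext (Subtype.ext (coordMod_add_smul ru.1.2.1 ru.2))
        (Subtype.ext (coordDiv_add_smul ru.1.2.1 ru.2)) }

lemma card_box_inter_preimage_le {ι' : Type*} [Fintype ι'] {L' : Submodule ℤ L}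
    (b' : Basis ι' ℤ L') [L'.toAddSubgroup.FiniteIndex] {A : Set L} (hp : 0 < p)
    (hA : IsPeriodic A p) :
    Nat.card (b'.box p ∩ Subtype.val ⁻¹' A : Set L') ≤
      Nat.card (b.box p ∩ A : Set L) * L'.toAddSubgroup.index := by
  have : Finite (b.box p) := Nat.finite_of_card_ne_zero (by rw [card_box]; positivity)
  let F (y : (b'.box p ∩ Subtype.val ⁻¹' A : Set L')) :
      (b.box p ∩ A : Set L) × (L ⧸ L'.toAddSubgroup) :=
    (⟨b.coordMod p y, coordMod_mem_box hp (y : L), (hA.coordMod_mem_iff (y : L)).2 y.2.2⟩,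
      b.coordDiv p y)
  have hF : Function.Injective F := by
    rintro ⟨y, hy, _⟩ ⟨z, hz, _⟩ h
    simp only [F, Prod.mk.injEq, Subtype.ext_iff, QuotientAddGroup.eq] at h
    obtain ⟨hmod, hdiv⟩ := h
    refine Subtype.ext (eq_of_mem_box_of_eq_add_smul hz hy (w := ⟨_, hdiv⟩) ?_).symm
    exact Subtype.ext (eq_add_smul_of_coordMod_eq hmod)
  calc _ ≤ Nat.card ((b.box p ∩ A : Set L) × (L ⧸ L'.toAddSubgroup)) :=
        Nat.card_le_card_of_injective F hF
    _ = _ := by rw [Nat.card_prod, AddSubgroup.index]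

end Module.Basis

end

/-- If `L'` is a full-rank sublattice of a lattice `L` of rank `n`, `A` is a periodic
subset of `L` (with period `ϖ`), and `A' = A ∩ L'` (which is periodic in `L'` with
period `ϖ'`), then the density of `A'` in `L'` is at most `[L : L']` times the density
of `A` in `L`. Densities are computed on fundamental boxes built from bases. -/
theorem stmt_17 (n : ℕ) (L : Type*) [AddCommGroup L] [Module ℤ L]
    (B : Module.Basis (Fin n) ℤ L) (L' : Submodule ℤ L) (B' : Module.Basis (Fin n) ℤ L')
    (hfin : L'.toAddSubgroup.FiniteIndex)
    (A : Set L) (ϖ ϖ' : ℕ) (hϖ : 1 ≤ ϖ) (hϖ' : 1 ≤ ϖ')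
    (hA : ∀ (a : L) (v : L), a ∈ A ↔ a + (ϖ : ℤ) • v ∈ A)
    (hA' : ∀ (a : L') (v : L'), (a : L) ∈ A ↔ ((a + (ϖ' : ℤ) • v : L') : L) ∈ A) :
    (Nat.card {y : L' | (∀ i, 0 ≤ B'.repr y i ∧ B'.repr y i < ϖ') ∧ (y : L) ∈ A} : ℚ)
        / (ϖ' : ℚ) ^ n
      ≤ (L'.toAddSubgroup.index : ℚ) *
        ((Nat.card ({y : L | ∀ i, 0 ≤ B.repr y i ∧ B.repr y i < ϖ} ∩ A : Set L) : ℚ)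
          / (ϖ : ℚ) ^ n) := by
  have hL' := B'.card_box_mul_inter (A := Subtype.val ⁻¹' A) hϖ' hA' ϖ
  have hL := B.card_box_mul_inter hϖ hA ϖ'
  have hle := B.card_box_inter_preimage_le B' (Nat.mul_pos hϖ hϖ')
    (IsPeriodic.of_dvd hA (dvd_mul_right ϖ ϖ'))
  rw [mul_comm ϖ' ϖ] at hL'
  rw [hL', hL, Fintype.card_fin] at hle
  change (Nat.card (B'.box ϖ' ∩ Subtype.val ⁻¹' A : Set L') : ℚ) / _ ≤
    _ * ((Nat.card (B.box ϖ ∩ A : Set L) : ℚ) / _)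
  rw [div_le_iff₀ (by positivity), mul_div_assoc', div_mul_eq_mul_div,
    le_div_iff₀ (by positivity)]
  exact_mod_cast hle.trans_eq (by ring)
end

section
/- Let V = ℝⁿ with lattice ℤⁿ, let N be any norm on V, let ϖ ≥ 1, let A ⊆ ℤⁿ be ϖ-periodic, and let F = {0,…,ϖ−1}ⁿ. Then the limit as r → ∞ of #{a ∈ A : N(a) < r} / #{v ∈ ℤⁿ : N(v) < r} exists and equals |F ∩ A|/ϖⁿ. -/
/-!
The number of lattice points `v` with `N v < r` is `vol {N < 1} · rⁿ + o(rⁿ)`, by the Riemann-sum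
count of lattice points in dilates of a bounded set with null frontier (here the convex unit ball
of `N`). Writing `v = f + ϖ q` with `f ∈ F`, the triangle inequality puts the points of the class
`f + ϖℤⁿ` with `N v < r` between the lattice balls of radii `(r ∓ N f) / ϖ`, so each class
contributes `vol {N < 1} · (r / ϖ)ⁿ + o(rⁿ)`, and a `ϖ`-periodic `A` is the union of `|F ∩ A|`
classes.
-/

open Filter Topology Pointwise MeasureTheory

theorem Filter.Tendsto.comp_add_div_div_pow {g : ℝ → ℝ} {κ : ℝ} {n : ℕ}
    (hg : Tendsto (fun s => g s / s ^ n) atTop (𝓝 κ)) (a : ℝ) {b : ℝ} (hb : 0 < b) :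
    Tendsto (fun r => g ((r + a) / b) / r ^ n) atTop (𝓝 (κ / b ^ n)) := by
  have hlin : Tendsto (fun r : ℝ => (r + a) / b) atTop atTop :=
    (tendsto_atTop_add_const_right _ a tendsto_id).atTop_div_const hb
  have hratio : Tendsto (fun r : ℝ => (r + a) / b / r) atTop (𝓝 b⁻¹) := by
    have : Tendsto (fun r : ℝ => (1 + a / r) / b) atTop (𝓝 ((1 + 0) / b)) :=
      ((tendsto_const_nhds.div_atTop tendsto_id).const_add 1).div_const b
    rw [add_zero, one_div] at this
    refine this.congr' ?_
    filter_upwards [eventually_gt_atTop 0] with r hr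
    field_simp
  rw [div_eq_mul_inv, ← inv_pow]
  refine ((hg.comp hlin).mul (hratio.pow n)).congr' ?_
  · filter_upwards [eventually_gt_atTop (|a|)] with r hr
    have hr0 : 0 < r := (abs_nonneg a).trans_lt hr
    have hra : 0 < r + a := by linarith [neg_abs_le a]
    simp only [Function.comp_apply, div_pow]
    field_simp

theorem Int.card_setOf_eq_sum_card_add_smul {ι : Type*} [Fintype ι] [DecidableEq ι]
    {P : (ι → ℤ) → Prop} (hP : {v | P v}.Finite) {m : ℤ} (hm : 0 < m) :
    Nat.card {v | P v} =
      ∑ f ∈ Fintype.piFinset fun _ => Finset.Ico 0 m, Nat.card {q | P (f + m • q)} := by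
  set F := Fintype.piFinset fun _ : ι => Finset.Ico 0 m
  let residue : (ι → ℤ) → (ι → ℤ) := fun v i => v i % m
  have hmaps : ∀ v ∈ hP.toFinset, residue v ∈ F := fun v _ => by
    simp [F, residue, Int.emod_nonneg _ hm.ne', Int.emod_lt_of_pos _ hm]
  rw [Nat.card_eq_card_finite_toFinset hP, Finset.card_eq_sum_card_fiberwise hmaps]
  refine Finset.sum_congr rfl fun f hf => ?_
  have hinj : Function.Injective fun q : ι → ℤ => f + m • q := fun q q' h =>
    smul_right_injective _ hm.ne' (add_left_cancel h)
  have himage : (fun q => f + m • q) '' {q | P (f + m • q)} =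
      ↑({v ∈ hP.toFinset | residue v = f}) := by
    ext v
    simp only [Set.mem_image, Set.mem_ofPred_eq, Finset.coe_filter, Set.Finite.mem_toFinset]
    constructor
    · rintro ⟨q, hq, rfl⟩
      refine ⟨hq, funext fun i => ?_⟩
      have hfi := Fintype.mem_piFinset.1 hf i
      rw [Finset.mem_Ico] at hfi
      simp [residue, Int.add_mul_emod_self_left, Int.emod_eq_of_lt hfi.1 hfi.2]
    · rintro ⟨hv, rfl⟩
      have hdecomp : residue v + m • (fun i => v i / m) = v :=
        funext fun i => Int.emod_add_mul_ediv (v i) m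
      exact ⟨fun i => v i / m, by rwa [hdecomp], hdecomp⟩
  rw [← Nat.card_image_of_injective hinj, himage, Nat.card_coe_set_eq, Set.ncard_coe_finset]

theorem mem_span_int_basisFun_iff {ι : Type*} [Finite ι] {y : ι → ℝ} :
    y ∈ Submodule.span ℤ (Set.range (Pi.basisFun ℝ ι)) ↔
      ∃ v : ι → ℤ, (fun i => (v i : ℝ)) = y := by
  rw [Module.Basis.mem_span_iff_repr_mem]
  simp only [Pi.basisFun_repr, Set.mem_range, eq_intCast]
  exact ⟨fun h => ⟨fun i => (h i).choose, funext fun i => (h i).choose_spec⟩,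
    fun ⟨v, hv⟩ i => ⟨v i, congrFun hv i⟩⟩

namespace Seminorm

section FiniteDimensional

variable {E : Type*} [NormedAddCommGroup E] [NormedSpace ℝ E] [FiniteDimensional ℝ E]
  (p : Seminorm ℝ E)

protected theorem continuous_of_finiteDimensional : Continuous p :=
  p.convexOn.locallyLipschitz.continuous

protected theorem isOpen_ball_zero (r : ℝ) : IsOpen (p.ball 0 r) := by
  rw [ball_zero_eq]
  exact isOpen_lt p.continuous_of_finiteDimensional continuous_const

theorem exists_pos_mul_norm_le (hp : ∀ x, p x = 0 → x = 0) :
    ∃ c > 0, ∀ x, c * ‖x‖ ≤ p x := by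
  rcases subsingleton_or_nontrivial E with hE | hE
  · exact ⟨1, one_pos, fun x => by simp [Subsingleton.elim x 0]⟩
  obtain ⟨x₀, hx₀, hmin⟩ := (isCompact_sphere (0 : E) 1).exists_isMinOn
    (NormedSpace.sphere_nonempty.2 zero_le_one) p.continuous_of_finiteDimensional.continuousOn
  have hx₀ : ‖x₀‖ = 1 := by simpa using hx₀
  refine ⟨p x₀, (apply_nonneg p x₀).lt_of_ne' fun h => by simp [hp x₀ h] at hx₀, fun x => ?_⟩
  rcases eq_or_ne x 0 with rfl | hx
  · simp
  have hnorm : 0 < ‖x‖ := norm_pos_iff.2 hx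
  have hmem : ‖x‖⁻¹ • x ∈ Metric.sphere (0 : E) 1 := by
    simp [norm_smul, hnorm.ne']
  have := hmin hmem
  simp only [Set.mem_ofPred_eq, map_smul_eq_mul, norm_inv, norm_norm] at this
  rwa [le_inv_mul_iff₀ hnorm, mul_comm] at this

theorem isBounded_ball_zero (hp : ∀ x, p x = 0 → x = 0) (r : ℝ) :
    Bornology.IsBounded (p.ball 0 r) := by
  obtain ⟨c, hc, hle⟩ := p.exists_pos_mul_norm_le hp
  refine (Metric.isBounded_closedBall (x := 0) (r := r / c)).subset fun x hx => ?_
  rw [mem_closedBall_zero_iff, le_div_iff₀ hc, mul_comm]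
  exact (hle x).trans (p.mem_ball_zero.1 hx).le

theorem measureReal_ball_zero_pos [MeasurableSpace E] [BorelSpace E] (μ : Measure E)
    [μ.IsAddHaarMeasure] (hp : ∀ x, p x = 0 → x = 0) {r : ℝ} (hr : 0 < r) :
    0 < μ.real (p.ball 0 r) :=
  ENNReal.toReal_pos ((p.isOpen_ball_zero r).measure_pos μ ⟨0, by simpa using hr⟩).ne'
    (p.isBounded_ball_zero hp r).measure_lt_top.ne

end FiniteDimensional

variable {ι : Type*} [Fintype ι] (p : Seminorm ℝ (ι → ℝ))

theorem finite_setOf_lt (hp : ∀ x, p x = 0 → x = 0) (r : ℝ) :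
    {v : ι → ℤ | p (fun i => (v i : ℝ)) < r}.Finite := by
  obtain ⟨c, hc, hle⟩ := p.exists_pos_mul_norm_le hp
  refine (isCompact_closedBall (0 : ι → ℤ) (r / c)).finite_of_discrete.subset fun v hv => ?_
  have hnorm : ‖v‖ ≤ ‖fun i => (v i : ℝ)‖ :=
    (pi_norm_le_iff_of_nonneg (norm_nonneg _)).2 fun i => by
      simpa [Int.norm_eq_abs] using norm_le_pi_norm (fun i => (v i : ℝ)) i
  rw [mem_closedBall_zero_iff, le_div_iff₀ hc, mul_comm]
  exact (mul_le_mul_of_nonneg_left hnorm hc.le).trans ((hle _).trans hv.le)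

theorem tendsto_card_setOf_lt_div_pow (hp : ∀ x, p x = 0 → x = 0) :
    Tendsto (fun r : ℝ => (Nat.card {v : ι → ℤ | p (fun i => (v i : ℝ)) < r} : ℝ) /
      r ^ Fintype.card ι) atTop (𝓝 (volume.real (p.ball 0 1))) := by
  refine (tendsto_card_div_pow_atTop_volume' _ (p.isBounded_ball_zero hp 1)
    (p.isOpen_ball_zero 1).measurableSet
    (Convex.addHaar_frontier volume (p.convex_ball 0 1)) fun x y hx hxy => ?_).congr' ?_
  · rw [smul_ball_zero hx.ne', smul_ball_zero (hx.trans_le hxy).ne']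
    exact ball_mono (by simpa [abs_of_pos hx, abs_of_pos (hx.trans_le hxy)] using hxy)
  filter_upwards [eventually_gt_atTop 0] with r hr
  -- `v ↦ r⁻¹ • v` matches `{v | p v < r}` with the unit ball's points in `r⁻¹ • ℤⁿ`.
  have hinj : Function.Injective fun v : ι → ℤ => r⁻¹ • (fun i => (v i : ℝ)) := by
    intro v w h
    have := congrArg (r • ·) h
    simp only [smul_inv_smul₀ hr.ne'] at this
    exact funext fun i => by exact_mod_cast congrFun this i
  rw [← Nat.card_image_of_injective hinj]
  congr 1
  refine congrArg (fun s : Set (ι → ℝ) => (Nat.card s : ℝ)) (Set.ext fun y => ?_)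
  simp only [Set.mem_inter_iff, Set.mem_inv_smul_set_iff₀ hr.ne', SetLike.mem_coe,
    mem_span_int_basisFun_iff, mem_ball_zero, Set.mem_image, Set.mem_ofPred_eq]
  constructor
  · rintro ⟨hy, v, hv⟩
    refine ⟨v, ?_, ?_⟩
    · rw [hv, map_smul_eq_mul, Real.norm_eq_abs, abs_of_pos hr]; nlinarith
    · rw [hv, inv_smul_smul₀ hr.ne']
  · rintro ⟨v, hv, rfl⟩
    refine ⟨?_, v, by rw [smul_inv_smul₀ hr.ne']⟩
    rw [map_smul_eq_mul, norm_inv, Real.norm_eq_abs, abs_of_pos hr, inv_mul_lt_one₀ hr]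
    exact hv

theorem tendsto_card_setOf_add_smul_lt_div_pow (hp : ∀ x, p x = 0 → x = 0) (f : ι → ℤ)
    {m : ℤ} (hm : 0 < m) :
    Tendsto (fun r : ℝ =>
        (Nat.card {q : ι → ℤ | p (fun i => ((f + m • q) i : ℝ)) < r} : ℝ) / r ^ Fintype.card ι)
      atTop (𝓝 (volume.real (p.ball 0 1) / (m : ℝ) ^ Fintype.card ι)) := by
  set c := p fun i => (f i : ℝ)
  have hmR : (0 : ℝ) < m := Int.cast_pos.2 hm
  have hcast (q : ι → ℤ) : (fun i => ((f + m • q) i : ℝ)) =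
      (fun i => (f i : ℝ)) + (m : ℝ) • fun i => (q i : ℝ) := by
    ext i; simp
  have hpm (q : ι → ℤ) : p ((m : ℝ) • fun i => (q i : ℝ)) = m * p fun i => (q i : ℝ) := by
    rw [map_smul_eq_mul, Real.norm_eq_abs, abs_of_pos hmR]
  have hsub (r : ℝ) :
      {q : ι → ℤ | p (fun i => (q i : ℝ)) < (r + -c) / m} ⊆
        {q : ι → ℤ | p (fun i => ((f + m • q) i : ℝ)) < r} := fun q hq => by
    simp only [Set.mem_ofPred_eq, lt_div_iff₀ hmR] at hq ⊢
    calc p (fun i => ((f + m • q) i : ℝ)) ≤ c + m * p fun i => (q i : ℝ) := by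
          rw [hcast, ← hpm]; exact map_add_le_add p _ _
      _ < r := by linarith
  have hsup (r : ℝ) :
      {q : ι → ℤ | p (fun i => ((f + m • q) i : ℝ)) < r} ⊆
        {q : ι → ℤ | p (fun i => (q i : ℝ)) < (r + c) / m} := fun q hq => by
    simp only [Set.mem_ofPred_eq, lt_div_iff₀ hmR] at hq ⊢
    calc p (fun i => (q i : ℝ)) * m
      _ = p ((fun i => ((f + m • q) i : ℝ)) - fun i => (f i : ℝ)) := by
          rw [hcast, add_sub_cancel_left, hpm, mul_comm]
      _ ≤ p (fun i => ((f + m • q) i : ℝ)) + c := map_sub_le_add p _ _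
      _ < r + c := by linarith
  have hL := p.tendsto_card_setOf_lt_div_pow hp
  refine tendsto_of_tendsto_of_tendsto_of_le_of_le' (hL.comp_add_div_div_pow (-c) hmR)
    (hL.comp_add_div_div_pow c hmR) ?_ ?_ <;>
  filter_upwards [eventually_gt_atTop 0] with r hr <;>
  gcongr
  · exact Nat.card_mono ((p.finite_setOf_lt hp _).subset (hsup r)) (hsub r)
  · exact Nat.card_mono (p.finite_setOf_lt hp _) (hsup r)

theorem card_setOf_mem_and_lt_eq_sum [DecidableEq ι] (hp : ∀ x, p x = 0 → x = 0)
    {A : Set (ι → ℤ)} [DecidablePred (· ∈ A)] {m : ℤ} (hm : 0 < m)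
    (hA : ∀ a v : ι → ℤ, a ∈ A ↔ a + m • v ∈ A) (r : ℝ) :
    Nat.card {a : ι → ℤ | a ∈ A ∧ p (fun i => (a i : ℝ)) < r} =
      ∑ f ∈ (Fintype.piFinset fun _ => Finset.Ico 0 m).filter (· ∈ A),
        Nat.card {q : ι → ℤ | p (fun i => ((f + m • q) i : ℝ)) < r} := by
  rw [Int.card_setOf_eq_sum_card_add_smul ((p.finite_setOf_lt hp r).subset fun _ h => h.2) hm,
    Finset.sum_filter]
  refine Finset.sum_congr rfl fun f _ => ?_
  split_ifs with hf
  · simp only [← hA f, hf, true_and]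
  · simp only [← hA f, hf, false_and, Set.ofPred_false, Nat.card_of_isEmpty]

theorem tendsto_card_setOf_mem_and_lt_div_pow [DecidableEq ι] (hp : ∀ x, p x = 0 → x = 0)
    {A : Set (ι → ℤ)} [DecidablePred (· ∈ A)] {m : ℤ} (hm : 0 < m)
    (hA : ∀ a v : ι → ℤ, a ∈ A ↔ a + m • v ∈ A) :
    Tendsto (fun r : ℝ =>
        (Nat.card {a : ι → ℤ | a ∈ A ∧ p (fun i => (a i : ℝ)) < r} : ℝ) / r ^ Fintype.card ι)
      atTop (𝓝 (((Fintype.piFinset fun _ => Finset.Ico 0 m).filter (· ∈ A)).card *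
        (volume.real (p.ball 0 1) / (m : ℝ) ^ Fintype.card ι))) := by
  simp_rw [p.card_setOf_mem_and_lt_eq_sum hp hm hA, Nat.cast_sum, Finset.sum_div]
  simpa using tendsto_finsetSum _ fun f _ => p.tendsto_card_setOf_add_smul_lt_div_pow hp f hm

end Seminorm

/-- For any norm `N` on `ℝⁿ` and any `ϖ`-periodic subset `A ⊆ ℤⁿ`, the natural density
of `A` in `ℤⁿ` with respect to `N` exists and equals `|F ∩ A|/ϖⁿ`, where
`F = {0,…,ϖ−1}ⁿ`. -/
theorem stmt_18 (n : ℕ) (N : (Fin n → ℝ) → ℝ)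
    (hN0 : ∀ x, N x = 0 → x = 0)
    (hNadd : ∀ x y, N (x + y) ≤ N x + N y)
    (hNsmul : ∀ (c : ℝ) (x), N (c • x) = |c| * N x)
    (ϖ : ℕ) (hϖ : 1 ≤ ϖ) (A : Set (Fin n → ℤ))
    (hA : ∀ (a : Fin n → ℤ) (v : Fin n → ℤ), a ∈ A ↔ a + (ϖ : ℤ) • v ∈ A) :
    Tendsto (fun r : ℝ =>
        (Nat.card {a : Fin n → ℤ | a ∈ A ∧ N (fun i => (a i : ℝ)) < r} : ℝ) /
        (Nat.card {v : Fin n → ℤ | N (fun i => (v i : ℝ)) < r} : ℝ))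
      atTop
      (nhds ((Nat.card {x : Fin n → ℤ | (∀ i, 0 ≤ x i ∧ x i < ϖ) ∧ x ∈ A} : ℝ) / (ϖ : ℝ) ^ n)) := by
  classical
  let p : Seminorm ℝ (Fin n → ℝ) :=
    Seminorm.of N hNadd fun c x => by rw [hNsmul, Real.norm_eq_abs]
  have hp : ∀ x, p x = 0 → x = 0 := hN0
  have hlimA := p.tendsto_card_setOf_mem_and_lt_div_pow hp (m := ϖ) (by exact_mod_cast hϖ) hA
  have hlimT := p.tendsto_card_setOf_lt_div_pow hp
  have hκ := (p.measureReal_ball_zero_pos volume hp one_pos).ne'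
  have hcard : Nat.card {x : Fin n → ℤ | (∀ i, 0 ≤ x i ∧ x i < ϖ) ∧ x ∈ A} =
      ((Fintype.piFinset fun _ => Finset.Ico 0 (ϖ : ℤ)).filter (· ∈ A)).card := by
    rw [← Set.ncard_coe_finset, ← Nat.card_coe_set_eq]
    congr! 2
    ext x
    simp
  rw [Fintype.card_fin] at hlimA hlimT
  rw [hcard]
  convert (hlimA.div hlimT hκ).congr' ?_ using 2
  · push_cast
    field_simp
  · filter_upwards [eventually_gt_atTop 0] with r hr
    exact div_div_div_cancel_right₀ (pow_ne_zero n hr.ne') _ _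
end
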